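/- Let α > 2, β > 0, η ≥ 0, M ≥ 0, q_c ∈ ℝ, ε ∈ (0, 1/2] and λ* > 0. Suppose the symmetric 2×2 real matrix Θ₂ = [[−λ* + q_c + η + (βM/2)(λ*)^{1/2+ε}, √(2λ*)], [√(2λ*), −α]] is negative semidefinite and the symmetric 2×2 real matrix Θ₃ = [[1 − βM/(2(λ*)^{1/2−ε}), √2], [√2, α]] is positive definite. Then for every λ ≥ λ*, −(1 − 2/α) λ + q_c + η + (βM/2) λ^{1/2+ε} ≤ 0. -/

import Mathlib

open Real Matrix

set_option maxHeartbeats 1000000 in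
/-- If
`Θ₂ = [[−λ* + q_c + η + (βM/2)(λ*)^{1/2+ε}, √(2λ*)], [√(2λ*), −α]]` is negative
semidefinite and `Θ₃ = [[1 − βM/(2(λ*)^{1/2−ε}), √2], [√2, α]]` is positive
definite, with `α > 2`, `β > 0`, `η ≥ 0`, `M ≥ 0`, `ε ∈ (0,1/2]`, `λ* > 0`,
then for every `λ ≥ λ*`, `−(1 − 2/α)λ + q_c + η + (βM/2)λ^{1/2+ε} ≤ 0`. -/
theorem schur_residual_modes_neumann
    (α β η M qc ε lamstar : ℝ)
    (hα : 2 < α) (hβ : 0 < β) (hη : 0 ≤ η) (hM : 0 ≤ M)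
    (hε : ε ∈ Set.Ioc (0:ℝ) (1/2)) (hlamstar : 0 < lamstar)
    (hΘ₂ : (-(!![-lamstar + qc + η + β * M / 2 * lamstar ^ ((1:ℝ)/2 + ε),
        Real.sqrt (2 * lamstar); Real.sqrt (2 * lamstar), -α])).PosSemidef)
    (hΘ₃ : (!![1 - β * M / (2 * lamstar ^ ((1:ℝ)/2 - ε)), Real.sqrt 2;
        Real.sqrt 2, α]).PosDef) :
    ∀ lam : ℝ, lamstar ≤ lam →
      -(1 - 2 / α) * lam + qc + η + β * M / 2 * lam ^ ((1:ℝ)/2 + ε) ≤ 0 := by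
  intro lam hlam
  set c := lamstar ^ ((1:ℝ)/2 - ε) with hc
  set d := lamstar ^ ((1:ℝ)/2 + ε) with hd
  have hcpos : 0 < c := Real.rpow_pos_of_pos hlamstar _
  have hdpos : 0 < d := Real.rpow_pos_of_pos hlamstar _
  have hdc : d * c = lamstar := by
    rw [hd, hc, ← Real.rpow_add hlamstar]
    norm_num
  have hlampos : 0 < lam := lt_of_lt_of_le hlamstar hlam
  set x := lam ^ ((1:ℝ)/2 + ε) with hx
  have hxpos : 0 < x := Real.rpow_pos_of_pos hlampos _
  -- key: x * c ≤ lam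
  have hkey : x * c ≤ lam := by
    have h1 : c ≤ lam ^ ((1:ℝ)/2 - ε) :=
      Real.rpow_le_rpow hlamstar.le hlam (by linarith [hε.2])
    have h2 : x * lam ^ ((1:ℝ)/2 - ε) = lam := by
      rw [hx, ← Real.rpow_add hlampos]; norm_num
    calc x * c ≤ x * lam ^ ((1:ℝ)/2 - ε) := by
          exact mul_le_mul_of_nonneg_left h1 hxpos.le
      _ = lam := h2
  -- determinant conditions
  have hneg : (-(!![-lamstar + qc + η + β * M / 2 * d,
      Real.sqrt (2 * lamstar); Real.sqrt (2 * lamstar), -α]))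
      = !![-(-lamstar + qc + η + β * M / 2 * d),
        -Real.sqrt (2 * lamstar); -Real.sqrt (2 * lamstar), α] := by
    ext i j
    fin_cases i <;> fin_cases j <;> simp
  have hdet2 := hΘ₂.dotProduct_mulVec_nonneg ![α, Real.sqrt (2 * lamstar)]
  rw [hneg] at hdet2
  simp [Matrix.mulVec, dotProduct, Fin.sum_univ_two] at hdet2
  have hsq : Real.sqrt (2 * lamstar) * Real.sqrt (2 * lamstar) = 2 * lamstar :=
    Real.mul_self_sqrt (by linarith)
  have hαpos : (0:ℝ) < α := by linarith
  have hs : (Real.sqrt 2 * Real.sqrt lamstar) * (Real.sqrt 2 * Real.sqrt lamstar)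
      = 2 * lamstar := by
    rw [mul_mul_mul_comm, Real.mul_self_sqrt (by norm_num : (0:ℝ) ≤ 2),
      Real.mul_self_sqrt hlamstar.le]
  have h2 : 0 ≤ (lamstar - qc - η - β * M / 2 * d) * α - 2 * lamstar := by
    nlinarith [hdet2, hs]
  have hdet3 := hΘ₃.dotProduct_mulVec_pos (x := ![α, -Real.sqrt 2]) (by
    intro h
    have := congrFun h 0
    simp at this
    linarith)
  simp [Matrix.mulVec, dotProduct, Fin.sum_univ_two] at hdet3
  have hsq2 : Real.sqrt 2 * Real.sqrt 2 = 2 := Real.mul_self_sqrt (by norm_num)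
  have h3 : 0 < (1 - β * M / (2 * c)) * α - 2 := by nlinarith [hdet3, hsq2, hαpos]
  have h3' : 0 < (c - β * M / 2) * α - 2 * c := by
    have := mul_pos hcpos h3
    field_simp at this ⊢
    nlinarith [this]
  clear hneg hdet2 hdet3 hΘ₂ hΘ₃ hs
  clear_value c d x
  -- reduce goal: multiply through by α * c
  have expand : (-(1 - 2 / α) * lam + qc + η + β * M / 2 * x) * (α * c)
      = -((α - 2) * lam) * c + (qc + η) * (α * c) + β * M / 2 * x * α * c := by
    field_simp
    ring
  have t1 : β * M / 2 * x * α * c ≤ β * M / 2 * α * lam := by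
    have h0 : 0 ≤ β * M / 2 * α := by positivity
    have := mul_le_mul_of_nonneg_left hkey h0
    nlinarith [this]

  have hcoef : 0 < (α - 2) * c - β * M / 2 * α := by nlinarith [h3']
  have t2 : ((α - 2) * c - β * M / 2 * α) * lamstar
      ≤ ((α - 2) * c - β * M / 2 * α) * lam :=
    mul_le_mul_of_nonneg_left hlam hcoef.le
  have e3 : 0 ≤ (lamstar - qc - η) * α * c - β * M / 2 * α * lamstar
      - 2 * lamstar * c := by
    have h2c := mul_nonneg h2 hcpos.le
    have hdd : β * M / 2 * d * α * c = β * M / 2 * α * lamstar := by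
      rw [show β * M / 2 * d * α * c = β * M / 2 * α * (d * c) by ring, hdc]
    nlinarith [h2c, hdd]
  have hgoal : (-(1 - 2 / α) * lam + qc + η + β * M / 2 * x) * (α * c) ≤ 0 := by
    rw [expand]
    nlinarith [t1, t2, e3]
  have hac : 0 < α * c := mul_pos hαpos hcpos
  nlinarith [hgoal, hac]
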